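/- Let f:{0,1}^n→{0,1} be a symmetric Boolean function such that f̃(w) = 0 for every w ∈ {0,1}^n with n/8 ≤ |w| ≤ 7n/8, and let f_s denote the common value of f on inputs of Hamming weight s. Then for every odd prime p with n/8 ≤ p ≤ n/2 and every integer s with 0 ≤ s ≤ n − 2p, it holds that f_s = f_{s+2p}. -/

import Mathlib

/-!
Put `A(w) = 2ⁿ f̃(w)`: it is an integer depending only on `|w|`, say `A(w) = B(|w|)`, and Fourier
inversion gives `2ⁿ f_t = Σ_k B(k) K_k(t)` with the Krawtchouk numbers `K_k(t) = [X^k] P_t`,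
`P_t = (1 - X)^t (1 + X)^(n-t)`. Modulo `p`, Frobenius gives `(1 ± X)^(2p) = (1 ± X^p)^2`, hence
`P_{s+2p} (1 + X^p)^2 = P_s (1 - X^p)^2`; as both sides have degree `≤ n + 2p`, comparing
coefficients yields `K_k(s + 2p) ≡ K_k(s)` whenever `k < p` or `k > n - p`. Every other `k` lies
in the band `n/8 ≤ k ≤ 7n/8` where `B(k) = 0`. Hence `p ∣ 2ⁿ (f_{s+2p} - f_s)`, and as `p` is
odd and `f` is `0/1`-valued, `f_{s+2p} = f_s`.
-/

namespace SymXOR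

/-- Hamming weight of a Boolean vector. -/
def hammingWeight {n : ℕ} (x : Fin n → Bool) : ℕ :=
  (Finset.univ.filter fun i => x i = true).card

/-- The inner product `x·w = Σ_i x_i w_i` of two Boolean vectors. -/
def dotProd {n : ℕ} (x w : Fin n → Bool) : ℕ :=
  (Finset.univ.filter fun i => x i = true ∧ w i = true).card

/-- A Boolean value viewed as a real number. -/
noncomputable def boolToReal (b : Bool) : ℝ := if b then 1 else 0

/-- The Fourier coefficient `f̃(w) = 2^{-n} Σ_x (-1)^{x·w} f(x)`. -/
noncomputable def fourierCoeff {n : ℕ} (f : (Fin n → Bool) → Bool) (w : Fin n → Bool) : ℝ :=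
  (1 / 2 ^ n) * ∑ x : Fin n → Bool, (-1 : ℝ) ^ dotProd x w * boolToReal (f x)

open Finset Polynomial

section Walsh

variable {n : ℕ} {R : Type*} [CommRing R]

def walshTransform (g : (Fin n → Bool) → R) (w : Fin n → Bool) : R :=
  ∑ y, (-1) ^ dotProd y w * g y

lemma map_walshTransform {S : Type*} [CommRing S] (φ : R →+* S) (g : (Fin n → Bool) → R)
    (w : Fin n → Bool) : φ (walshTransform g w) = walshTransform (fun x => φ (g x)) w := by
  simp [walshTransform]

lemma neg_one_pow_dotProd (x w : Fin n → Bool) :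
    (-1 : R) ^ dotProd x w = ∏ i, if x i = true ∧ w i = true then -1 else 1 := by
  rw [dotProd, card_filter, ← prod_pow_eq_pow_sum]
  exact prod_congr rfl fun i _ => by split_ifs <;> simp

lemma sum_neg_one_pow_dotProd_mul (x y : Fin n → Bool) :
    ∑ w, (-1 : R) ^ dotProd x w * (-1) ^ dotProd y w = if x = y then 2 ^ n else 0 := by
  simp only [neg_one_pow_dotProd, ← prod_mul_distrib]
  rw [← Fintype.prod_sum fun i b =>
    (if x i = true ∧ b = true then (-1 : R) else 1) * if y i = true ∧ b = true then -1 else 1]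
  have hfactor : ∀ i, ∑ b : Bool, (if x i = true ∧ b = true then (-1 : R) else 1) *
      (if y i = true ∧ b = true then -1 else 1) = if x i = y i then 2 else 0 := by
    intro i
    cases x i <;> cases y i <;> norm_num [Fintype.sum_bool]
  simp only [hfactor, prod_ite_zero, prod_const, card_univ, Fintype.card_fin, funext_iff, mem_univ,
    true_imp_iff]

lemma sum_walshTransform_mul_neg_one_pow (g : (Fin n → Bool) → R) (x : Fin n → Bool) :
    ∑ w, walshTransform g w * (-1) ^ dotProd x w = 2 ^ n * g x := by
  calc ∑ w, walshTransform g w * (-1) ^ dotProd x w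
      = ∑ y, g y * ∑ w, (-1) ^ dotProd y w * (-1) ^ dotProd x w := by
        simp only [walshTransform, sum_mul, mul_sum]
        rw [sum_comm]
        exact sum_congr rfl fun _ _ => sum_congr rfl fun _ _ => by ring
    _ = 2 ^ n * g x := by simp [sum_neg_one_pow_dotProd_mul, mul_comm]

end Walsh

section Symmetry

variable {n : ℕ}

lemma card_filter_comp_perm {α : Type*} [Fintype α] (σ : Equiv.Perm α) (P : α → Prop)
    [DecidablePred P] : #{i | P (σ i)} = #{i | P i} := by
  simp only [card_filter]
  exact Equiv.sum_comp σ fun i => if P i then 1 else 0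

lemma hammingWeight_comp_perm (σ : Equiv.Perm (Fin n)) (x : Fin n → Bool) :
    hammingWeight (x ∘ σ) = hammingWeight x :=
  card_filter_comp_perm σ fun i => x i = true

lemma dotProd_comp_perm (σ : Equiv.Perm (Fin n)) (x w : Fin n → Bool) :
    dotProd (x ∘ σ) (w ∘ σ) = dotProd x w :=
  card_filter_comp_perm σ fun i => x i = true ∧ w i = true

lemma exists_hammingWeight_eq {t : ℕ} (ht : t ≤ n) :
    ∃ x : Fin n → Bool, hammingWeight x = t := by
  obtain ⟨S, -, hS⟩ := exists_subset_card_eq (s := (univ : Finset (Fin n))) (by simpa using ht)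
  exact ⟨fun i => decide (i ∈ S), by simp [hammingWeight, hS]⟩

lemma exists_perm_comp_eq_of_hammingWeight_eq {w w' : Fin n → Bool}
    (h : hammingWeight w = hammingWeight w') : ∃ σ : Equiv.Perm (Fin n), w ∘ σ = w' := by
  have hcard : Fintype.card {i // w' i = true} = Fintype.card {i // w i = true} := by
    simpa [Fintype.card_subtype, hammingWeight] using h.symm
  obtain ⟨e⟩ := Fintype.card_eq.mp hcard
  refine ⟨e.extendSubtype, funext fun i => ?_⟩
  by_cases hi : w' i = true
  · simp [hi, e.extendSubtype_mem i hi]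
  · simpa [hi] using e.extendSubtype_not_mem i hi

variable {R : Type*} [CommRing R]

lemma walshTransform_comp_perm {g : (Fin n → Bool) → R} (σ : Equiv.Perm (Fin n))
    (hg : ∀ x, g (x ∘ σ) = g x) (w : Fin n → Bool) :
    walshTransform g (w ∘ σ) = walshTransform g w := by
  refine (Fintype.sum_equiv (σ.symm.arrowCongr (Equiv.refl Bool)) _ _ fun y => ?_).symm
  change _ = (-1) ^ dotProd (y ∘ σ) (w ∘ σ) * g (y ∘ σ)
  rw [dotProd_comp_perm, hg]

lemma walshTransform_eq_of_hammingWeight_eq {g : (Fin n → Bool) → R} {G : ℕ → R}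
    (hg : ∀ x, g x = G (hammingWeight x)) {w w' : Fin n → Bool}
    (h : hammingWeight w = hammingWeight w') : walshTransform g w = walshTransform g w' := by
  obtain ⟨σ, rfl⟩ := exists_perm_comp_eq_of_hammingWeight_eq h
  exact (walshTransform_comp_perm σ (fun x => by rw [hg, hg, hammingWeight_comp_perm]) w).symm

lemma exists_walshTransform_eq_comp_hammingWeight {g : (Fin n → Bool) → R} {G : ℕ → R}
    (hg : ∀ x, g x = G (hammingWeight x)) :
    ∃ B : ℕ → R, ∀ w, walshTransform g w = B (hammingWeight w) :=
  have hfactors : (walshTransform g).FactorsThrough hammingWeight := fun _ _ h =>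
    walshTransform_eq_of_hammingWeight_eq hg h
  ⟨Function.extend hammingWeight (walshTransform g) 0,
    fun w => (hfactors.extend_apply 0 w).symm⟩

end Symmetry

section Krawtchouk

variable (R : Type*) [CommRing R]

noncomputable def krawtchouk (n t k : ℕ) : R := ((1 - X) ^ t * (1 + X) ^ (n - t) : R[X]).coeff k

variable {R} {n : ℕ}

lemma sum_neg_one_pow_dotProd_mul_X_pow (x : Fin n → Bool) :
    ∑ w, (-1 : R[X]) ^ dotProd x w * X ^ hammingWeight w =
      (1 - X) ^ hammingWeight x * (1 + X) ^ (n - hammingWeight x) := by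
  have hterm : ∀ w : Fin n → Bool, (-1 : R[X]) ^ dotProd x w * X ^ hammingWeight w =
      ∏ i, if w i = true then (if x i = true then -X else X) else 1 := by
    intro w
    rw [neg_one_pow_dotProd, hammingWeight, ← prod_const, prod_filter, ← prod_mul_distrib]
    exact prod_congr rfl fun i _ => by cases x i <;> cases w i <;> simp
  simp only [hterm]
  rw [← Fintype.prod_sum fun i b =>
    if b = true then (if x i = true then -X else (X : R[X])) else 1]
  have hfactor : ∀ i, ∑ b : Bool,
      (if b = true then (if x i = true then -X else (X : R[X])) else 1) =
        if x i = true then 1 - X else 1 + X := by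
    intro i
    cases x i <;> simp <;> ring
  rw [Fintype.prod_congr _ _ hfactor, prod_ite, prod_const, prod_const, filter_not,
    card_sdiff_of_subset (filter_subset _ _), card_univ, Fintype.card_fin]
  rfl

lemma two_pow_mul_eq_sum_krawtchouk {g : (Fin n → Bool) → R} {B : ℕ → R}
    (hB : ∀ w, walshTransform g w = B (hammingWeight w)) (x : Fin n → Bool) :
    2 ^ n * g x = ∑ k ∈ range (n + 1), B k * krawtchouk R n (hammingWeight x) k := by
  have hcoeff : ∀ (w : Fin n → Bool) (k : ℕ),
      ((-1 : R[X]) ^ dotProd x w * X ^ hammingWeight w).coeff k =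
        if k = hammingWeight w then (-1) ^ dotProd x w else 0 := by
    intro w k
    rw [← coeff_C_mul_X_pow]
    simp
  simp only [krawtchouk, ← sum_neg_one_pow_dotProd_mul_X_pow, finsetSum_coeff, hcoeff, mul_sum,
    mul_ite, mul_zero]
  rw [sum_comm, ← sum_walshTransform_mul_neg_one_pow]
  refine sum_congr rfl fun w _ => ?_
  rw [sum_ite_eq' (range (n + 1)), if_pos (mem_range.mpr (Nat.lt_succ_of_le ?_)), hB]
  exact card_filter_le _ _ |>.trans_eq (card_fin n)

end Krawtchouk

section Frobenius

variable {R : Type*} [CommRing R]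

lemma coeff_eq_zero_of_mul_one_add_X_pow_eq {D E : R[X]} {m N k : ℕ}
    (h : D * (1 + X ^ (2 * m)) = X ^ m * E) (hD : D.natDegree ≤ N) (hE : E.natDegree ≤ N)
    (hk : k < m ∨ N < k + m) : D.coeff k = 0 := by
  rcases hk with hk | hk
  · simpa [mul_add, coeff_mul_X_pow', coeff_X_pow_mul', hk.not_ge, show ¬2 * m ≤ k by omega]
      using congrArg (coeff · k) h
  · have := congrArg (coeff · (k + 2 * m)) h
    simp only [mul_add, mul_one, coeff_add, coeff_mul_X_pow', coeff_X_pow_mul', le_add_self,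
      if_true, show m ≤ k + 2 * m by omega, Nat.add_sub_cancel] at this
    rwa [coeff_eq_zero_of_natDegree_lt (by omega : D.natDegree < k + 2 * m),
      coeff_eq_zero_of_natDegree_lt (by omega : E.natDegree < k + 2 * m - m), zero_add] at this

lemma natDegree_one_sub_X_pow_mul_one_add_X_pow_le (a b : ℕ) :
    ((1 - X) ^ a * (1 + X) ^ b : R[X]).natDegree ≤ a + b := by
  compute_degree

lemma krawtchouk_add_two_mul_eq (p : ℕ) [Fact p.Prime] [CharP R p] {n s k : ℕ}
    (hs : s + 2 * p ≤ n) (hk : k < p ∨ n < k + p) :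
    krawtchouk R n (s + 2 * p) k = krawtchouk R n s k := by
  set G' : R[X] := (1 - X) ^ (s + 2 * p) * (1 + X) ^ (n - (s + 2 * p))
  set G : R[X] := (1 - X) ^ s * (1 + X) ^ (n - s)
  have hfrob : G' * (1 + X ^ p) ^ 2 = G * (1 - X ^ p) ^ 2 := by
    rw [← one_pow p, ← add_pow_char, ← sub_pow_char, ← pow_mul, ← pow_mul]
    simp only [G, G', show n - s = n - (s + 2 * p) + 2 * p by omega]
    ring
  have hdeg : ∀ t ≤ n, ((1 - X) ^ t * (1 + X) ^ (n - t) : R[X]).natDegree ≤ n := fun t ht =>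
    (natDegree_one_sub_X_pow_mul_one_add_X_pow_le _ _).trans (by omega)
  rw [krawtchouk, krawtchouk, ← sub_eq_zero, ← coeff_sub]
  refine coeff_eq_zero_of_mul_one_add_X_pow_eq (m := p) (E := -2 * (G' + G)) ?_
    ((natDegree_sub_le _ _).trans (max_le (hdeg _ hs) (hdeg _ (by omega)))) ?_ hk
  · linear_combination hfrob
  · refine natDegree_mul_le.trans ?_
    rw [natDegree_neg, natDegree_ofNat, zero_add]
    exact natDegree_add_le_of_degree_le (hdeg _ hs) (hdeg _ (by omega))

end Frobenius

lemma walshTransform_eq_zero_of_fourierCoeff_eq_zero (R : Type*) [CommRing R] {n : ℕ}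
    {f : (Fin n → Bool) → Bool} {w : Fin n → Bool} (h : fourierCoeff f w = 0) :
    walshTransform (fun x => ((f x).toNat : R)) w = 0 := by
  have hℤ : walshTransform (fun x => ((f x).toNat : ℤ)) w = 0 := by
    have hcast := map_walshTransform (Int.castRingHom ℝ) (fun x => ((f x).toNat : ℤ)) w
    have hreal : walshTransform (fun x => ((f x).toNat : ℝ)) w = 2 ^ n * fourierCoeff f w := by
      rw [fourierCoeff, walshTransform, ← mul_assoc, one_div, mul_inv_cancel₀ (by positivity),
        one_mul]
      congr! 2 with x
      cases f x <;> simp [boolToReal]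
    apply Int.cast_injective (α := ℝ)
    simpa [hreal, h] using hcast
  simpa [hℤ] using (map_walshTransform (Int.castRingHom R) (fun x => ((f x).toNat : ℤ)) w).symm

theorem value_periodic_of_middle_fourier_vanish_general {n : ℕ}
    (f : (Fin n → Bool) → Bool) (F : ℕ → Bool)
    (hsymm : ∀ x, f x = F (hammingWeight x))
    (hzero : ∀ w : Fin n → Bool,
      (n : ℝ) / 8 ≤ (hammingWeight w : ℝ) → (hammingWeight w : ℝ) ≤ 7 * n / 8 →
        fourierCoeff f w = 0)
    (p : ℕ) (hp : p.Prime) (hodd : Odd p)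
    (hp1 : (n : ℝ) / 8 ≤ (p : ℝ)) :
    ∀ s : ℕ, s + 2 * p ≤ n → F s = F (s + 2 * p) := by
  intro s hs
  have := Fact.mk hp
  set g : (Fin n → Bool) → ZMod p := fun x => ((f x).toNat : ZMod p)
  obtain ⟨B, hB⟩ := exists_walshTransform_eq_comp_hammingWeight (g := g)
    (G := fun t => ((F t).toNat : ZMod p)) (by simp [g, hsymm])
  have hsplit : ∀ k ∈ range (n + 1),
      B k * krawtchouk (ZMod p) n s k = B k * krawtchouk (ZMod p) n (s + 2 * p) k := by
    intro k hk
    obtain ⟨w, rfl⟩ := exists_hammingWeight_eq (Nat.lt_succ_iff.mp (mem_range.mp hk))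
    by_cases hmid : (n : ℝ) / 8 ≤ hammingWeight w ∧ (hammingWeight w : ℝ) ≤ 7 * n / 8
    · rw [← hB, walshTransform_eq_zero_of_fourierCoeff_eq_zero _ (hzero w hmid.1 hmid.2),
        zero_mul, zero_mul]
    · have hk : hammingWeight w < p ∨ n < hammingWeight w + p := by
        rw [not_and_or, not_le, not_le] at hmid
        rcases hmid with h | h
        · exact Or.inl (by exact_mod_cast h.trans_le hp1)
        · exact Or.inr (by exact_mod_cast (by linarith : (n : ℝ) < hammingWeight w + p))
      rw [krawtchouk_add_two_mul_eq p hs hk]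
  obtain ⟨x, hx⟩ := exists_hammingWeight_eq (n := n) (t := s) (by omega)
  obtain ⟨x', hx'⟩ := exists_hammingWeight_eq hs
  have htwo : (2 : ZMod p) ^ n ≠ 0 := pow_ne_zero n
    (Ring.two_ne_zero (by rw [ZMod.ringChar_zmod_n]; exact hodd.ne_two_of_dvd_nat dvd_rfl))
  have hgx : g x = g x' := mul_left_cancel₀ htwo (by
    rw [two_pow_mul_eq_sum_krawtchouk hB, two_pow_mul_eq_sum_krawtchouk hB, hx, hx',
      sum_congr rfl hsplit])
  simp only [g, hsymm, hx, hx'] at hgx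
  revert hgx
  cases F s <;> cases F (s + 2 * p) <;> simp

/-- If a symmetric Boolean function `f` (with value `F s` on inputs of
weight `s`) has vanishing Fourier coefficients on all `w` with `n/8 ≤ |w| ≤ 7n/8`, then
for every odd prime `p` with `n/8 ≤ p ≤ n/2` and every `s` with `s + 2p ≤ n`, we have
`f_s = f_{s+2p}`. -/
theorem value_periodic_of_middle_fourier_vanish {n : ℕ}
    (f : (Fin n → Bool) → Bool) (F : ℕ → Bool)
    (hsymm : ∀ x, f x = F (hammingWeight x))
    (hzero : ∀ w : Fin n → Bool,
      (n : ℝ) / 8 ≤ (hammingWeight w : ℝ) → (hammingWeight w : ℝ) ≤ 7 * n / 8 →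
        fourierCoeff f w = 0)
    (p : ℕ) (hp : p.Prime) (hodd : Odd p)
    (hp1 : (n : ℝ) / 8 ≤ (p : ℝ)) (hp2 : (p : ℝ) ≤ (n : ℝ) / 2) :
    ∀ s : ℕ, s + 2 * p ≤ n → F s = F (s + 2 * p) :=
  value_periodic_of_middle_fourier_vanish_general f F hsymm hzero p hp hodd hp1

end SymXOR
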